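/- Let f(z) = Σ_{s≥0} a_s z^s be analytic on the unit disk with |f| ≤ 1, let b = |a_0|, and let 0 ≤ r < 1. Then Σ_{s≥1} |a_s| r^s ≤ (1 - b²) r / (1 - b r). -/

import Mathlib

/-!
Wiener's coefficient bound `‖a n‖ ≤ 1 - ‖a 0‖ ^ 2` for `n ≥ 1` gives the estimate termwise
against a geometric series. For the bound, average `f` over the rotations `z ↦ ζ ^ k z` by the
`n`-th roots of unity: this keeps only the coefficients `a (n j)`, so `g w = ∑ a (n j) w ^ j` is
again bounded by `1` on the disc, with `g 0 = a 0` and `g' 0 = a n`. The Schwarz–Pick estimate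
`‖g' 0‖ ≤ 1 - ‖g 0‖ ^ 2` then finishes.
-/

open Complex Metric Set Finset Filter
open scoped ComplexConjugate

theorem norm_sub_le_norm_one_sub_conj_mul {c u : ℂ} (hc : ‖c‖ ≤ 1) (hu : ‖u‖ ≤ 1) :
    ‖u - c‖ ≤ ‖1 - conj c * u‖ := by
  have hgap : normSq (1 - conj c * u) - normSq (u - c) = (1 - normSq c) * (1 - normSq u) := by
    simp only [normSq_apply, sub_re, sub_im, mul_re, mul_im, conj_re, conj_im, one_re, one_im]
    ring
  have hc2 : normSq c ≤ 1 := by rw [normSq_eq_norm_sq]; exact pow_le_one₀ (norm_nonneg c) hc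
  have hu2 : normSq u ≤ 1 := by rw [normSq_eq_norm_sq]; exact pow_le_one₀ (norm_nonneg u) hu
  rw [norm_def, norm_def]
  exact Real.sqrt_le_sqrt (by nlinarith)

theorem norm_deriv_le_one_sub_sq_of_mapsTo_ball {g : ℂ → ℂ}
    (hd : DifferentiableOn ℂ g (ball 0 1)) (hg : MapsTo g (ball 0 1) (closedBall 0 1)) :
    ‖deriv g 0‖ ≤ 1 - ‖g 0‖ ^ 2 := by
  have h0 : (0 : ℂ) ∈ ball (0 : ℂ) 1 := mem_ball_self one_pos
  have hg_le : ∀ w ∈ ball (0 : ℂ) 1, ‖g w‖ ≤ 1 := fun w hw => by simpa using hg hw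
  rcases (hg_le 0 h0).lt_or_eq with hlt | heq
  · set c := g 0
    have hden : ∀ w ∈ ball (0 : ℂ) 1, 1 - conj c * g w ≠ 0 := fun w hw hzero => by
      have : ‖conj c * g w‖ < 1 := by
        rw [norm_mul, RCLike.norm_conj]
        exact mul_lt_one_of_nonneg_of_lt_one_left (norm_nonneg _) hlt (hg_le w hw)
      rw [← sub_eq_zero.mp hzero, norm_one] at this
      exact this.false
    have hpos : 0 < 1 - ‖c‖ ^ 2 := by nlinarith [norm_nonneg c]
    -- Schwarz's lemma applies to `g` followed by the disc automorphism sending `c` to `0`.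
    set φ : ℂ → ℂ := fun w => (g w - c) / (1 - conj c * g w)
    have hφd : DifferentiableOn ℂ φ (ball 0 1) :=
      (hd.sub_const c).div ((differentiableOn_const 1).sub (hd.const_mul _)) hden
    have hφ : MapsTo φ (ball 0 1) (closedBall (φ 0) 1) := fun w hw => by
      simp only [φ, c, sub_self, zero_div, mem_closedBall_zero_iff, norm_div]
      exact div_le_one_of_le₀ (norm_sub_le_norm_one_sub_conj_mul (hg_le 0 h0) (hg_le w hw))
        (norm_nonneg _)
    have hgd : HasDerivAt g (deriv g 0) 0 :=
      (hd.differentiableAt (isOpen_ball.mem_nhds h0)).hasDerivAt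
    have hφ' : deriv φ 0 = deriv g 0 / (1 - ‖c‖ ^ 2 : ℝ) := by
      have : HasDerivAt φ _ 0 :=
        (hgd.sub_const c).div ((hgd.const_mul (conj c)).const_sub 1) (hden 0 h0)
      rw [this.deriv, show g 0 = c from rfl, sub_self, zero_mul, sub_zero, conj_mul']
      push_cast
      field_simp
    have := norm_deriv_le_one_of_mapsTo_ball hφd hφ one_pos
    rwa [hφ', norm_div, norm_real, Real.norm_of_nonneg hpos.le, div_le_one hpos] at this
  · have hconst : g =ᶠ[nhds 0] fun _ => g 0 := by
      refine eventuallyEq_of_mem (isOpen_ball.mem_nhds h0) ?_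
      refine eqOn_of_isPreconnected_of_isMaxOn_norm (convex_ball 0 1).isPreconnected isOpen_ball
        hd h0 fun w hw => ?_
      simpa [heq] using hg_le w hw
    rw [hconst.deriv_eq, deriv_const, heq]
    norm_num

theorem hasFPowerSeriesOnBall_ofScalars_of_hasSum {c : ℕ → ℂ} {g : ℂ → ℂ}
    (h : ∀ z : ℂ, ‖z‖ < 1 → HasSum (fun s => c s * z ^ s) (g z)) :
    HasFPowerSeriesOnBall g (FormalMultilinearSeries.ofScalars ℂ c) 0 1 where
  r_le := by
    refine ENNReal.le_of_forall_nnreal_lt fun r hr => ?_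
    have hr' : ‖(r : ℂ)‖ < 1 := by simpa using (show (r : ℝ) < 1 by exact_mod_cast hr)
    refine FormalMultilinearSeries.le_radius_of_summable_norm _ ?_
    simpa [FormalMultilinearSeries.ofScalars_norm] using (h _ hr').summable.norm
  r_pos := one_pos
  hasSum {y} hy := by
    rw [mem_eball_zero_iff, ← ENNReal.coe_one, enorm_lt_coe] at hy
    rw [zero_add]
    refine (h y (by exact_mod_cast hy)).congr_fun fun s => ?_
    rw [FormalMultilinearSeries.ofScalars_apply_eq, smul_eq_mul, mul_comm]

namespace IsPrimitiveRoot

variable {K : Type*} [Field K] {ζ : K} {n : ℕ}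

theorem sum_pow_pow_eq_ite (hζ : IsPrimitiveRoot ζ n) (s : ℕ) :
    ∑ k ∈ range n, (ζ ^ k) ^ s = if n ∣ s then (n : K) else 0 := by
  simp_rw [← pow_mul, mul_comm _ s, pow_mul]
  split_ifs with hs
  · simp [(hζ.pow_eq_one_iff_dvd s).mpr hs]
  · have hne : ζ ^ s ≠ 1 := fun h => hs ((hζ.pow_eq_one_iff_dvd s).mp h)
    rw [geom_sum_eq hne, ← pow_mul, mul_comm, pow_mul, hζ.pow_eq_one, one_pow, sub_self,
      zero_div]

variable [TopologicalSpace K] [IsTopologicalRing K] [CharZero K]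

theorem hasSum_comp_mul_left (hζ : IsPrimitiveRoot ζ n) (hn : 0 < n) {b S : ℕ → K}
    (h : ∀ k, HasSum (fun s => (ζ ^ k) ^ s * b s) (S k)) :
    HasSum (fun j => b (n * j)) ((∑ k ∈ range n, S k) / n) := by
  have hn' : (n : K) ≠ 0 := Nat.cast_ne_zero.mpr hn.ne'
  have hfilter : HasSum (fun s => if n ∣ s then (n : K) * b s else 0) (∑ k ∈ range n, S k) := by
    convert hasSum_sum fun k _ => h k using 2 with s
    rw [← sum_mul, hζ.sum_pow_pow_eq_ite]
    split_ifs <;> simp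
  have hsupp : ∀ s ∉ Set.range (n * ·), (if n ∣ s then (n : K) * b s else 0) = 0 := by
    rintro s hs
    rw [if_neg fun ⟨j, hj⟩ => hs ⟨j, hj.symm⟩]
  have := ((mul_right_injective₀ hn.ne').hasSum_iff hsupp).mpr hfilter
  convert this.div_const (n : K) using 1
  ext j
  simp [hn']

end IsPrimitiveRoot

theorem norm_coeff_le_one_sub_norm_coeff_zero_sq {f : ℂ → ℂ} {a : ℕ → ℂ}
    (hsum : ∀ z : ℂ, ‖z‖ < 1 → HasSum (fun s => a s * z ^ s) (f z))
    (hb : ∀ z : ℂ, ‖z‖ < 1 → ‖f z‖ ≤ 1) {n : ℕ} (hn : 0 < n) :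
    ‖a n‖ ≤ 1 - ‖a 0‖ ^ 2 := by
  set ζ := Complex.exp (2 * Real.pi * I / n)
  have hζ : IsPrimitiveRoot ζ n := isPrimitiveRoot_exp n hn.ne'
  have hrot : ∀ z : ℂ, ‖z‖ < 1 → ∀ k : ℕ, ‖ζ ^ k * z‖ < 1 := fun z hz k => by
    rwa [norm_mul, norm_pow, hζ.norm'_eq_one hn.ne', one_pow, one_mul]
  -- The section `∑ a (n j) w ^ j` at `w = z ^ n` is the mean of `f` over the `n` points `ζ ^ k z`.
  have hsection : ∀ z : ℂ, ‖z‖ < 1 →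
      HasSum (fun j => a (n * j) * (z ^ n) ^ j) ((∑ k ∈ range n, f (ζ ^ k * z)) / n) := by
    intro z hz
    refine (hζ.hasSum_comp_mul_left (b := fun s => a s * z ^ s) hn fun k => ?_).congr_fun
      fun j => by ring
    exact (hsum _ (hrot z hz k)).congr_fun fun s => by ring
  set g : ℂ → ℂ := fun w => ∑' j, a (n * j) * w ^ j
  have hg : ∀ w : ℂ, ‖w‖ < 1 → HasSum (fun j => a (n * j) * w ^ j) (g w) ∧ ‖g w‖ ≤ 1 := by
    intro w hw
    obtain ⟨z, rfl⟩ := IsAlgClosed.exists_pow_nat_eq w hn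
    have hz : ‖z‖ < 1 := by
      rwa [norm_pow, pow_lt_one_iff_of_nonneg (norm_nonneg z) hn.ne'] at hw
    have hs := hsection z hz
    refine ⟨hs.summable.hasSum, ?_⟩
    rw [show g (z ^ n) = _ from hs.tsum_eq, norm_div, norm_natCast, div_le_one (by positivity)]
    calc ‖∑ k ∈ range n, f (ζ ^ k * z)‖ ≤ ∑ k ∈ range n, ‖f (ζ ^ k * z)‖ := norm_sum_le _ _
      _ ≤ ∑ k ∈ range n, 1 := sum_le_sum fun k _ => hb _ (hrot z hz k)
      _ = n := by simp
  have hps := hasFPowerSeriesOnBall_ofScalars_of_hasSum fun w hw => (hg w hw).1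
  have hg0 : g 0 = a 0 := by simpa using (hps.coeff_zero fun _ => 0).symm
  have hg' : deriv g 0 = a n := by simpa using hps.hasFPowerSeriesAt.deriv
  have hd : DifferentiableOn ℂ g (ball 0 1) := by
    simpa [← ENNReal.coe_one, Metric.eball_coe] using hps.differentiableOn
  have hmaps : MapsTo g (ball 0 1) (closedBall 0 1) := fun w hw =>
    mem_closedBall_zero_iff.mpr (hg w (mem_ball_zero_iff.mp hw)).2
  simpa [hg0, hg'] using norm_deriv_le_one_sub_sq_of_mapsTo_ball hd hmaps

theorem stmt_7 (f : ℂ → ℂ) (a : ℕ → ℂ)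
    (hsum : ∀ z : ℂ, ‖z‖ < 1 → HasSum (fun s : ℕ => a s * z ^ s) (f z))
    (hb : ∀ z : ℂ, ‖z‖ < 1 → ‖f z‖ ≤ 1)
    (r : ℝ) (hr0 : 0 ≤ r) (hr1 : r < 1) :
    ∑' s : ℕ, ‖a (s + 1)‖ * r ^ (s + 1) ≤ (1 - ‖a 0‖ ^ 2) * r / (1 - r) := by
  have hle : ∀ s : ℕ, ‖a (s + 1)‖ * r ^ (s + 1) ≤ (1 - ‖a 0‖ ^ 2) * r * r ^ s := fun s =>
    calc ‖a (s + 1)‖ * r ^ (s + 1)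
        ≤ (1 - ‖a 0‖ ^ 2) * r ^ (s + 1) := by
          gcongr
          exact norm_coeff_le_one_sub_norm_coeff_zero_sq hsum hb s.succ_pos
      _ = (1 - ‖a 0‖ ^ 2) * r * r ^ s := by ring
  have hgeom : HasSum (fun s : ℕ => (1 - ‖a 0‖ ^ 2) * r * r ^ s)
      ((1 - ‖a 0‖ ^ 2) * r / (1 - r)) := by
    simpa [div_eq_mul_inv] using (hasSum_geometric_of_lt_one hr0 hr1).mul_left _
  rw [← hgeom.tsum_eq]
  exact (hgeom.summable.of_nonneg_of_le (fun s => by positivity) hle).tsum_le_tsum hle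
    hgeom.summable
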